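/- Let T > 0 and let M : [0,T] → Matrix (2×2, ℝ) be a continuous path of real 2×2 matrices with det M(t) = 1 for all t ∈ [0,T] (a path in Sp(2) = SL(2,ℝ)) and M(0) = I. For every nonzero u ∈ ℝ² there exists a continuous function θ_u : [0,T] → ℝ such that M(t)u = ‖M(t)u‖ (cos θ_u(t), sin θ_u(t)) for all t, and the quantity Δ_M(u) = (θ_u(T) − θ_u(0))/(2π) does not depend on the choice of such θ_u. Moreover, the image of the resulting rotation function Δ_M : ℝ² ∖ {0} → ℝ is a compact interval whose length is strictly less than 1/2. -/

import Mathlib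

/-- `θ` is a continuous lift of the argument of `t ↦ M(t) u` on `[0,T]`:
`M(t)u = ‖M(t)u‖ (cos θ(t), sin θ(t))`, where `‖·‖` is the Euclidean norm. -/
def IsArgLift (M : ℝ → Matrix (Fin 2) (Fin 2) ℝ) (T : ℝ) (u : Fin 2 → ℝ)
    (θ : ℝ → ℝ) : Prop :=
  ContinuousOn θ (Set.Icc 0 T) ∧
  ∀ t ∈ Set.Icc 0 T,
    ((M t).mulVec u 0 =
      Real.sqrt (((M t).mulVec u 0) ^ 2 + ((M t).mulVec u 1) ^ 2) * Real.cos (θ t)) ∧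
    ((M t).mulVec u 1 =
      Real.sqrt (((M t).mulVec u 0) ^ 2 + ((M t).mulVec u 1) ^ 2) * Real.sin (θ t))

/-!
Identify `ℝ²` with `ℂ` and write `e(s) = (cos s, sin s)`. The map `(s, t) ↦ M(t) e(s)` never
vanishes, so by the homotopy lifting property of the covering `exp : ℂ → ℂ \ {0}` it has an
argument `Θ(s, t)` that is jointly continuous. Two continuous arguments of the same nonvanishing
path differ by a constant in `2πℤ`, hence `Δ` is well defined, `s ↦ Δ(e(s))` is continuous, and
`Δ(e(s + π)) = Δ(-e(s)) = Δ(e(s))`; the image of `Δ` is thus the image of a continuous periodic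
function, a compact interval. For its length: if `e(s₁), e(s₂)` are independent then so are
`M(t) e(s₁), M(t) e(s₂)` for every `t`, so the angle `Θ(s₂, t) - Θ(s₁, t)` never meets `πℤ` and
varies by less than `π`; the two rotation numbers differ by less than `π / 2π = 1/2`.
-/

open Set Real Function Matrix
open Complex (I)

def vecToComplex (v : Fin 2 → ℝ) : ℂ := ⟨v 0, v 1⟩

theorem continuous_vecToComplex : Continuous vecToComplex :=
  Complex.equivRealProdCLM.symm.continuous.comp
    (f := fun v : Fin 2 → ℝ ↦ (v 0, v 1)) (by fun_prop)

theorem vecToComplex_eq_zero {v : Fin 2 → ℝ} : vecToComplex v = 0 ↔ v = 0 := by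
  simp [vecToComplex, Complex.ext_iff, funext_iff, Fin.forall_fin_two]

theorem norm_vecToComplex (v : Fin 2 → ℝ) : ‖vecToComplex v‖ = √(v 0 ^ 2 + v 1 ^ 2) := by
  simp [vecToComplex, Complex.norm_def, Complex.normSq_mk, sq]

theorem vecToComplex_cos_sin (s : ℝ) : vecToComplex ![cos s, sin s] = Complex.exp (s * I) := by
  simp [vecToComplex, Complex.exp_mul_I, Complex.ext_iff, ← Complex.ofReal_cos,
    ← Complex.ofReal_sin]

theorem cos_sin_vec_ne_zero (s : ℝ) : ![cos s, sin s] ≠ 0 := fun h =>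
  Complex.exp_ne_zero _ ((vecToComplex_cos_sin s).symm.trans (vecToComplex_eq_zero.2 h))

def IsPolarAngle (v : Fin 2 → ℝ) (θ : ℝ) : Prop :=
  v 0 = √(v 0 ^ 2 + v 1 ^ 2) * cos θ ∧ v 1 = √(v 0 ^ 2 + v 1 ^ 2) * sin θ

namespace IsPolarAngle

variable {v w : Fin 2 → ℝ} {θ α β : ℝ}

theorem iff_vecToComplex :
    IsPolarAngle v θ ↔ vecToComplex v = ‖vecToComplex v‖ * Complex.exp (θ * I) := by
  rw [norm_vecToComplex, Complex.ext_iff, Complex.re_ofReal_mul, Complex.im_ofReal_mul,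
    Complex.exp_ofReal_mul_I_re, Complex.exp_ofReal_mul_I_im]
  rfl

theorem arg_vecToComplex (v : Fin 2 → ℝ) : IsPolarAngle v (Complex.arg (vecToComplex v)) := by
  rw [IsPolarAngle, ← norm_vecToComplex, Complex.norm_mul_cos_arg, Complex.norm_mul_sin_arg]
  exact ⟨rfl, rfl⟩

theorem eq_smul (h : IsPolarAngle v θ) : v = √(v 0 ^ 2 + v 1 ^ 2) • ![cos θ, sin θ] := by
  ext i
  fin_cases i
  · exact h.1
  · exact h.2

theorem smul (h : IsPolarAngle v θ) {r : ℝ} (hr : 0 ≤ r) : IsPolarAngle (r • v) θ := by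
  have hnorm : √((r • v) 0 ^ 2 + (r • v) 1 ^ 2) = r * √(v 0 ^ 2 + v 1 ^ 2) := by
    simp only [Pi.smul_apply, smul_eq_mul, mul_pow, ← mul_add, sqrt_mul (sq_nonneg r),
      sqrt_sq hr]
  rw [IsPolarAngle, hnorm]
  simp only [Pi.smul_apply, smul_eq_mul, mul_assoc, ← h.1, ← h.2, and_self]

theorem neg (h : IsPolarAngle v θ) : IsPolarAngle (-v) (θ + π) := by
  simpa only [IsPolarAngle, Pi.neg_apply, neg_sq, cos_add_pi, sin_add_pi, mul_neg, neg_inj]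

theorem cross (hv : IsPolarAngle v α) (hw : IsPolarAngle w β) :
    v 0 * w 1 - v 1 * w 0 = √(v 0 ^ 2 + v 1 ^ 2) * √(w 0 ^ 2 + w 1 ^ 2) * sin (β - α) := by
  calc v 0 * w 1 - v 1 * w 0
      = (√(v 0 ^ 2 + v 1 ^ 2) * cos α) * (√(w 0 ^ 2 + w 1 ^ 2) * sin β)
        - (√(v 0 ^ 2 + v 1 ^ 2) * sin α) * (√(w 0 ^ 2 + w 1 ^ 2) * cos β) := by
        rw [← hv.1, ← hv.2, ← hw.1, ← hw.2]
    _ = _ := by rw [sin_sub]; ring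

end IsPolarAngle

theorem Matrix.mulVec_ne_zero_of_det_ne_zero {n R : Type*} [Fintype n] [DecidableEq n]
    [CommRing R] [IsDomain R] {A : Matrix n n R} (hA : A.det ≠ 0) {v : n → R} (hv : v ≠ 0) :
    A *ᵥ v ≠ 0 :=
  fun h => hA (exists_mulVec_eq_zero_iff.1 ⟨v, hv, h⟩)

theorem Matrix.cross_mulVec_eq_det_mul (A : Matrix (Fin 2) (Fin 2) ℝ) (v w : Fin 2 → ℝ) :
    (A *ᵥ v) 0 * (A *ᵥ w) 1 - (A *ᵥ v) 1 * (A *ᵥ w) 0 = A.det * (v 0 * w 1 - v 1 * w 0) := by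
  simp only [mulVec, dotProduct, Fin.sum_univ_two, det_fin_two]
  ring

theorem Complex.exp_eq_norm_exp_mul_exp_im_mul_I (w : ℂ) :
    exp w = ‖exp w‖ * exp (w.im * I) := by
  conv_lhs => rw [← re_add_im w, exp_add]
  rw [norm_exp, ofReal_exp]

theorem exists_continuous_arg_lift {A : Type*} [TopologicalSpace A] {T : ℝ} (hT : 0 < T)
    {z : A → ℝ → ℂ} (hz : ContinuousOn (uncurry z) (univ ×ˢ Icc 0 T))
    (hz0 : ∀ a, ∀ t ∈ Icc 0 T, z a t ≠ 0) {θ₀ : A → ℝ} (hθ₀ : Continuous θ₀)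
    (h0 : ∀ a, z a 0 = ‖z a 0‖ * Complex.exp (θ₀ a * I)) :
    ∃ Θ : A → ℝ → ℝ, Continuous (uncurry Θ) ∧
      ∀ a, ∀ t ∈ Icc 0 T, z a t = ‖z a t‖ * Complex.exp (Θ a t * I) := by
  have hTI : ∀ τ : unitInterval, T * τ ∈ Icc 0 T := fun τ =>
    ⟨mul_nonneg hT.le τ.2.1, mul_le_of_le_one_right hT.le τ.2.2⟩
  have hz0' : ∀ a, z a 0 ≠ 0 := fun a => hz0 a 0 (left_mem_Icc.2 hT.le)
  -- Lift `(τ, a) ↦ z a (T τ)` through `exp`; the argument is the imaginary part of the lift.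
  let H : C(unitInterval × A, {w : ℂ // w ≠ 0}) :=
    ⟨fun p => ⟨z p.2 (T * p.1), hz0 _ _ (hTI p.1)⟩,
      (hz.comp_continuous (f := fun p : unitInterval × A => (p.2, T * p.1)) (by fun_prop)
        fun p => ⟨trivial, hTI p.1⟩).subtype_mk _⟩
  have hH : ∀ p, (H p : ℂ) = z p.2 (T * p.1) := fun p => rfl
  have hz_zero : Continuous fun a => z a 0 :=
    hz.comp_continuous (f := fun a => (a, 0)) (by fun_prop) fun a => ⟨trivial, left_mem_Icc.2 hT.le⟩
  let f : C(A, ℂ) := ⟨fun a => Real.log ‖z a 0‖ + θ₀ a * I,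
    (Complex.continuous_ofReal.comp (hz_zero.norm.log fun a => norm_ne_zero_iff.2 (hz0' a))).add
      ((Complex.continuous_ofReal.comp hθ₀).mul continuous_const)⟩
  have H_0 : ∀ a, H (0, a) = ⟨Complex.exp (f a), Complex.exp_ne_zero _⟩ := by
    intro a
    ext
    simp [hH, f, Complex.exp_add, Complex.ofReal_log (norm_nonneg _),
      Complex.exp_log (Complex.ofReal_ne_zero.2 (norm_ne_zero_iff.2 (hz0' a))), ← h0 a]
  let L := Complex.isCoveringMap_exp.liftHomotopy H f H_0
  refine ⟨fun a t => (L (projIcc 0 1 zero_le_one (t / T), a)).im, by fun_prop, fun a t ht => ?_⟩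
  have hL := congr_arg Subtype.val (congr_fun (Complex.isCoveringMap_exp.liftHomotopy_lifts H f H_0)
    (projIcc 0 1 zero_le_one (t / T), a))
  have hτ : T * (projIcc 0 1 zero_le_one (t / T) : ℝ) = t := by
    rw [projIcc_of_mem _ ⟨div_nonneg ht.1 hT.le, (div_le_one hT).2 ht.2⟩]
    field_simp
  rw [Function.comp_apply, hH, hτ] at hL
  rw [← hL]
  exact Complex.exp_eq_norm_exp_mul_exp_im_mul_I _

theorem IsPreconnected.sub_eq_sub_of_exp_mul_I_eq {X : Type*} [TopologicalSpace X] {S : Set X}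
    (hS : IsPreconnected S) {θ θ' : X → ℝ} (hθ : ContinuousOn θ S) (hθ' : ContinuousOn θ' S)
    (h : ∀ x ∈ S, Complex.exp (θ x * I) = Complex.exp (θ' x * I))
    {a b : X} (ha : a ∈ S) (hb : b ∈ S) : θ b - θ' b = θ a - θ' a := by
  refine hS.constant_of_mapsTo (T := AddSubgroup.zmultiples (2 * π))
    (isDiscrete_iff_discreteTopology.2
      (inferInstanceAs (DiscreteTopology (AddSubgroup.zmultiples (2 * π)))))
    (hθ.sub hθ') (fun x hx => ?_) hb ha
  obtain ⟨m, hm⟩ := Circle.exp_eq_exp.1 (Circle.coe_inj.1 (h x hx))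
  exact ⟨m, by simp only [zsmul_eq_mul, Pi.sub_apply, hm]; ring⟩

theorem IsPreconnected.abs_sub_lt_pi_of_sin_ne_zero {X : Type*} [TopologicalSpace X] {S : Set X}
    (hS : IsPreconnected S) {φ : X → ℝ} (hφ : ContinuousOn φ S) (h : ∀ x ∈ S, sin (φ x) ≠ 0)
    {a b : X} (ha : a ∈ S) (hb : b ∈ S) : |φ b - φ a| < π := by
  set k : ℤ := ⌊φ a / π⌋
  have hnot : ∀ m : ℤ, (m * π : ℝ) ∉ φ '' S := by
    rintro m ⟨x, hx, hxm⟩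
    exact h x hx (hxm ▸ sin_int_mul_pi m)
  have hka : k * π < φ a := by
    refine lt_of_le_of_ne ?_ fun hk => hnot k ⟨a, ha, hk.symm⟩
    exact (le_div_iff₀ pi_pos).1 (Int.floor_le _)
  have hak : φ a < (k + 1) * π := (div_lt_iff₀ pi_pos).1 (Int.lt_floor_add_one _)
  have hmem : ∀ x ∈ S, φ x ∈ Ioo (k * π) ((k + 1) * π) := by
    intro x hx
    have hxa := (hS.image φ hφ).Icc_subset (mem_image_of_mem φ hx) (mem_image_of_mem φ ha)
    have hax := (hS.image φ hφ).Icc_subset (mem_image_of_mem φ ha) (mem_image_of_mem φ hx)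
    by_contra hout
    rcases not_and_or.1 hout with hlow | hhigh
    · exact hnot k (hxa ⟨not_lt.1 hlow, hka.le⟩)
    · exact hnot (k + 1) (by push_cast; exact hax ⟨hak.le, not_lt.1 hhigh⟩)
  obtain ⟨ha₁, ha₂⟩ := hmem a ha
  obtain ⟨hb₁, hb₂⟩ := hmem b hb
  rw [abs_sub_lt_iff]
  constructor <;> linarith

noncomputable def totalRotation (T : ℝ) (θ : ℝ → ℝ) : ℝ := (θ T - θ 0) / (2 * π)

namespace IsArgLift

variable {M : ℝ → Matrix (Fin 2) (Fin 2) ℝ} {T : ℝ} {u w : Fin 2 → ℝ} {θ ψ : ℝ → ℝ}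

theorem isPolarAngle (h : IsArgLift M T u θ) {t : ℝ} (ht : t ∈ Icc 0 T) :
    IsPolarAngle (M t *ᵥ u) (θ t) :=
  h.2 t ht

theorem smul (h : IsArgLift M T u θ) {r : ℝ} (hr : 0 ≤ r) : IsArgLift M T (r • u) θ :=
  ⟨h.1, fun t ht => by rw [mulVec_smul]; exact (h.isPolarAngle ht).smul hr⟩

theorem neg (h : IsArgLift M T u θ) : IsArgLift M T (-u) (fun t => θ t + π) :=
  ⟨h.1.add continuousOn_const, fun t ht => by rw [mulVec_neg]; exact (h.isPolarAngle ht).neg⟩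

theorem totalRotation_eq (hT : 0 ≤ T) (hu : ∀ t ∈ Icc 0 T, M t *ᵥ u ≠ 0)
    (hθ : IsArgLift M T u θ) (hψ : IsArgLift M T u ψ) :
    totalRotation T θ = totalRotation T ψ := by
  have hexp : ∀ t ∈ Icc 0 T, Complex.exp (θ t * I) = Complex.exp (ψ t * I) := by
    intro t ht
    have hz : (‖vecToComplex (M t *ᵥ u)‖ : ℂ) ≠ 0 :=
      Complex.ofReal_ne_zero.2 (norm_ne_zero_iff.2 (vecToComplex_eq_zero.not.2 (hu t ht)))
    exact mul_left_cancel₀ hz ((IsPolarAngle.iff_vecToComplex.1 (hθ.isPolarAngle ht)).symm.trans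
      (IsPolarAngle.iff_vecToComplex.1 (hψ.isPolarAngle ht)))
  have := isPreconnected_Icc.sub_eq_sub_of_exp_mul_I_eq hθ.1 hψ.1 hexp
    (left_mem_Icc.2 hT) (right_mem_Icc.2 hT)
  rw [totalRotation, totalRotation]
  congr 1
  linarith

theorem abs_totalRotation_sub_lt (hT : 0 ≤ T) (hdet : ∀ t ∈ Icc 0 T, (M t).det ≠ 0)
    (hcross : u 0 * w 1 - u 1 * w 0 ≠ 0) (hθ : IsArgLift M T u θ) (hψ : IsArgLift M T w ψ) :
    |totalRotation T ψ - totalRotation T θ| < 1 / 2 := by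
  have hsin : ∀ t ∈ Icc 0 T, sin (ψ t - θ t) ≠ 0 := by
    intro t ht hsin
    have hdet_cross := ((hθ.isPolarAngle ht).cross (hψ.isPolarAngle ht)).symm
    rw [hsin, mul_zero, cross_mulVec_eq_det_mul] at hdet_cross
    exact mul_ne_zero (hdet t ht) hcross hdet_cross.symm
  have hlt := isPreconnected_Icc.abs_sub_lt_pi_of_sin_ne_zero (hψ.1.sub hθ.1) hsin
    (left_mem_Icc.2 hT) (right_mem_Icc.2 hT)
  simp only [Pi.sub_apply] at hlt
  have hdiff : totalRotation T ψ - totalRotation T θ =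
      ((ψ T - θ T) - (ψ 0 - θ 0)) / (2 * π) := by
    rw [totalRotation, totalRotation]
    ring
  rw [hdiff, abs_div, abs_of_pos two_pi_pos, div_lt_iff₀ two_pi_pos]
  linarith

end IsArgLift

section ArgLiftFamily

variable {M : ℝ → Matrix (Fin 2) (Fin 2) ℝ} {T : ℝ} {Θ : ℝ → ℝ → ℝ}

theorem exists_isArgLift_family (hT : 0 < T) (hM : ContinuousOn M (Icc 0 T))
    (hdet : ∀ t ∈ Icc 0 T, (M t).det ≠ 0) (hM0 : M 0 = 1) :
    ∃ Θ : ℝ → ℝ → ℝ, Continuous (uncurry Θ) ∧ ∀ s, IsArgLift M T ![cos s, sin s] (Θ s) := by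
  have hcont : ContinuousOn (fun p : ℝ × ℝ => M p.2 *ᵥ ![cos p.1, sin p.1])
      (univ ×ˢ Icc 0 T) := by
    rw [continuousOn_iff_continuous_domRestrict]
    exact (continuousOn_iff_continuous_domRestrict.1
      (hM.comp continuousOn_snd fun p hp => hp.2)).matrix_mulVec (by fun_prop)
  obtain ⟨Θ, hΘc, hΘ⟩ := exists_continuous_arg_lift
    (z := fun s t => vecToComplex (M t *ᵥ ![cos s, sin s])) hT
    (continuous_vecToComplex.comp_continuousOn hcont)
    (fun s t ht => vecToComplex_eq_zero.not.2
      (mulVec_ne_zero_of_det_ne_zero (hdet t ht) (cos_sin_vec_ne_zero s)))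
    continuous_id (fun s => by simp [hM0, vecToComplex_cos_sin, Complex.norm_exp_ofReal_mul_I])
  exact ⟨Θ, hΘc, fun s => ⟨(hΘc.comp (Continuous.prodMk_right s)).continuousOn,
    fun t ht => IsPolarAngle.iff_vecToComplex.2 (hΘ s t ht)⟩⟩

theorem isArgLift_family_arg (hΘ : ∀ s, IsArgLift M T ![cos s, sin s] (Θ s)) (u : Fin 2 → ℝ) :
    IsArgLift M T u (Θ (Complex.arg (vecToComplex u))) := by
  have := (hΘ (Complex.arg (vecToComplex u))).smul (sqrt_nonneg (u 0 ^ 2 + u 1 ^ 2))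
  rwa [← (IsPolarAngle.arg_vecToComplex u).eq_smul] at this

theorem periodic_totalRotation_family (hT : 0 ≤ T) (hdet : ∀ t ∈ Icc 0 T, (M t).det ≠ 0)
    (hΘ : ∀ s, IsArgLift M T ![cos s, sin s] (Θ s)) :
    Periodic (fun s => totalRotation T (Θ s)) π := by
  intro s
  show totalRotation T (Θ (s + π)) = totalRotation T (Θ s)
  have hshift : ![cos (s + π), sin (s + π)] = -![cos s, sin s] := by
    ext i
    fin_cases i <;> simp [cos_add_pi, sin_add_pi]
  have hneg := (hΘ s).neg
  rw [← hshift] at hneg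
  rw [(hΘ (s + π)).totalRotation_eq hT
    (fun t ht => mulVec_ne_zero_of_det_ne_zero (hdet t ht) (cos_sin_vec_ne_zero _)) hneg]
  simp only [totalRotation, add_sub_add_right_eq_sub]

theorem totalRotation_family_sub_lt (hT : 0 ≤ T) (hdet : ∀ t ∈ Icc 0 T, (M t).det ≠ 0)
    (hΘ : ∀ s, IsArgLift M T ![cos s, sin s] (Θ s)) (s₁ s₂ : ℝ) :
    totalRotation T (Θ s₂) - totalRotation T (Θ s₁) < 1 / 2 := by
  by_cases hsin : sin (s₂ - s₁) = 0
  · obtain ⟨k, hk⟩ := sin_eq_zero_iff.1 hsin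
    have hper := (periodic_totalRotation_family hT hdet hΘ).int_mul k s₁
    rw [show s₂ = s₁ + k * π by linarith, hper, sub_self]
    norm_num
  · have hcross : cos s₁ * sin s₂ - sin s₁ * cos s₂ ≠ 0 := by
      rwa [sin_sub, mul_comm (sin s₂), mul_comm (cos s₂)] at hsin
    exact (abs_lt.1 ((hΘ s₁).abs_totalRotation_sub_lt hT hdet hcross (hΘ s₂))).2

end ArgLiftFamily

theorem Function.Periodic.exists_range_eq_Icc {D : ℝ → ℝ} {c ℓ : ℝ} (hc : c ≠ 0)
    (hD : Continuous D) (hper : Periodic D c) (h : ∀ x y, D y - D x < ℓ) :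
    ∃ a b, a ≤ b ∧ b - a < ℓ ∧ range D = Icc a b := by
  have hK := hper.compact_of_continuous hc hD
  have hC := isConnected_range hD
  obtain ⟨x, hx⟩ := hK.sInf_mem hC.nonempty
  obtain ⟨y, hy⟩ := hK.sSup_mem hC.nonempty
  refine ⟨D x, D y, ?_, h x y, ?_⟩
  · rw [hx, hy]
    exact csInf_le hK.bddBelow (hK.sSup_mem hC.nonempty)
  · rw [hx, hy]
    exact eq_Icc_of_connected_compact hC hK

theorem rotation_interval_of_symplectic_path
    (T : ℝ) (hT : 0 < T) (M : ℝ → Matrix (Fin 2) (Fin 2) ℝ)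
    (hM : ContinuousOn M (Set.Icc 0 T))
    (hdet : ∀ t ∈ Set.Icc 0 T, (M t).det = 1)
    (hM0 : M 0 = 1) :
    ∃ Δ : (Fin 2 → ℝ) → ℝ,
      (∀ u : Fin 2 → ℝ, u ≠ 0 → ∃ θ : ℝ → ℝ, IsArgLift M T u θ) ∧
      (∀ u : Fin 2 → ℝ, u ≠ 0 → ∀ θ : ℝ → ℝ, IsArgLift M T u θ →
        Δ u = (θ T - θ 0) / (2 * Real.pi)) ∧
      (∃ a b : ℝ, a ≤ b ∧ b - a < 1 / 2 ∧
        Δ '' {u : Fin 2 → ℝ | u ≠ 0} = Set.Icc a b) := by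
  have hdet' : ∀ t ∈ Icc 0 T, (M t).det ≠ 0 := fun t ht => by simp [hdet t ht]
  obtain ⟨Θ, hΘc, hΘ⟩ := exists_isArgLift_family hT hM hdet' hM0
  set D : ℝ → ℝ := fun s => totalRotation T (Θ s)
  have hΔ : ∀ u : Fin 2 → ℝ, u ≠ 0 → ∀ θ, IsArgLift M T u θ →
      D (Complex.arg (vecToComplex u)) = totalRotation T θ := fun u hu θ hθ =>
    (isArgLift_family_arg hΘ u).totalRotation_eq hT.le
      (fun t ht => mulVec_ne_zero_of_det_ne_zero (hdet' t ht) hu) hθ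
  refine ⟨fun u => D (Complex.arg (vecToComplex u)),
    fun u _ => ⟨_, isArgLift_family_arg hΘ u⟩, hΔ, ?_⟩
  have himage : (fun u => D (Complex.arg (vecToComplex u))) '' {u | u ≠ 0} = range D := by
    refine Subset.antisymm ?_ ?_
    · rintro _ ⟨u, -, rfl⟩
      exact mem_range_self _
    · rintro _ ⟨s, rfl⟩
      exact ⟨_, cos_sin_vec_ne_zero s, hΔ _ (cos_sin_vec_ne_zero s) _ (hΘ s)⟩
  have hDc : Continuous D := by unfold D totalRotation; fun_prop
  rw [himage]
  exact (periodic_totalRotation_family hT.le hdet' hΘ).exists_range_eq_Icc pi_ne_zero hDc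
    (totalRotation_family_sub_lt hT.le hdet' hΘ)
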